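/- Let 𝓜 be a finite nonempty model class, let M* ∈ 𝓜, let γ > 0, and let T ≥ 1. For each t ∈ {1,…,T} let μ^t ∈ Δ(𝓜) and let p^t ∈ Δ(Π) be a minimizer of the risk p ↦ V̂^{μ^t}_γ(p) over Δ(Π), where V̂^{μ}_γ(p) := sup_{M∈𝓜} E_{π∼p} E_{M̄∼μ}[ f^M(π_M) − f^M(π) − γ·D_RL^2(M(π), M̄(π)) ]. Then Σ_{t=1}^T E_{π∼p^t}[ f^{M*}(π_{M*}) − f^{M*}(π) ] ≤ T · dec̄_γ(𝓜) + γ · Σ_{t=1}^T E_{π∼p^t} E_{M̂∼μ^t}[ D_RL^2( M*(π), M̂(π) ) ]. -/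

import Mathlib

open MeasureTheory ProbabilityTheory

noncomputable section

/-- Squared Hellinger distance between two measures, computed with respect to the
(dominating) measure `P + Q`. -/
def hellingerSq {Ω : Type*} [MeasurableSpace Ω] (P Q : Measure Ω) : ℝ :=
  ∫ x, (Real.sqrt ((P.rnDeriv (P + Q) x).toReal)
      - Real.sqrt ((Q.rnDeriv (P + Q) x).toReal)) ^ 2 ∂(P + Q)

/-- A model in the DMSO framework. -/
structure Model (O : Type*) [MeasurableSpace O] (H : ℕ) (Pol : Type*) where
  P : Pol → Measure O
  prob : ∀ π, IsProbabilityMeasure (P π)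
  R : O → Fin H → ℝ
  measR : ∀ h, Measurable fun o => R o h
  R_nonneg : ∀ o h, 0 ≤ R o h
  R_le_one : ∀ o h, R o h ≤ 1
  sumR_le_one : ∀ o, ∑ h, R o h ≤ 1

variable {O : Type*} [MeasurableSpace O] {H : ℕ} {Pol : Type*}

/-- The value `f^M(π)` of policy `π` in model `M`. -/
def Model.val (M : Model O H Pol) (π : Pol) : ℝ :=
  ∫ o, (∑ h, M.R o h) ∂(M.P π)

/-- The divergence `D_RL²(M(π), M'(π))`. -/
def DRL2 (M M' : Model O H Pol) (π : Pol) : ℝ :=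
  hellingerSq (M.P π) (M'.P π)
    + ∫ o, (∑ h, (M.R o h - M'.R o h) ^ 2) ∂(M.P π)

/-- The set `Δ(ι)` of probability distributions on a finite set `ι`. -/
def ProbDist (ι : Type*) [Fintype ι] : Type _ :=
  {p : ι → ℝ // (∀ i, 0 ≤ p i) ∧ ∑ i, p i = 1}

variable [Fintype Pol] {ι : Type*} [Fintype ι]

/-- The Decision-Estimation Coefficient `dec_γ(𝓜, μ̄)`. -/
def dec (γ : ℝ) (Mdl : ι → Model O H Pol) (πopt : ι → Pol) (μbar : ProbDist ι) : ℝ :=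
  ⨅ p : ProbDist Pol, ⨆ i : ι, ∑ π, p.1 π * ∑ j, μbar.1 j *
    ((Mdl i).val (πopt i) - (Mdl i).val π - γ * DRL2 (Mdl i) (Mdl j) π)

/-- `dec̄_γ(𝓜) = sup_{μ̄∈Δ(𝓜)} dec_γ(𝓜, μ̄)`. -/
def decBar (γ : ℝ) (Mdl : ι → Model O H Pol) (πopt : ι → Pol) : ℝ :=
  ⨆ μbar : ProbDist ι, dec γ Mdl πopt μbar

/-- The E2D risk `V̂^μ_γ(p)`. -/
def Vhat (γ : ℝ) (Mdl : ι → Model O H Pol) (πopt : ι → Pol) (μ : ProbDist ι)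
    (p : ProbDist Pol) : ℝ :=
  ⨆ i : ι, ∑ π, p.1 π * ∑ j, μ.1 j *
    ((Mdl i).val (πopt i) - (Mdl i).val π - γ * DRL2 (Mdl i) (Mdl j) π)

/-! ### Auxiliary lemmas -/

instance ProbDist.instNonempty {κ : Type*} [Fintype κ] [Nonempty κ] :
    Nonempty (ProbDist κ) := by
  classical
  obtain ⟨k0⟩ := ‹Nonempty κ›
  refine ⟨⟨fun k => if k = k0 then 1 else 0, fun k => ?_, by simp⟩⟩
  dsimp only; split <;> norm_num

lemma ProbDist.sum_mul_le {κ : Type*} [Fintype κ] (μ : ProbDist κ) {f : κ → ℝ} {C : ℝ}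
    (h : ∀ k, f k ≤ C) : ∑ k, μ.1 k * f k ≤ C := by
  calc ∑ k, μ.1 k * f k ≤ ∑ k, μ.1 k * C :=
        Finset.sum_le_sum fun k _ => mul_le_mul_of_nonneg_left (h k) (μ.2.1 k)
    _ = C := by rw [← Finset.sum_mul, μ.2.2, one_mul]

lemma ProbDist.le_sum_mul {κ : Type*} [Fintype κ] (μ : ProbDist κ) {f : κ → ℝ} {c : ℝ}
    (h : ∀ k, c ≤ f k) : c ≤ ∑ k, μ.1 k * f k := by
  calc c = ∑ k, μ.1 k * c := by rw [← Finset.sum_mul, μ.2.2, one_mul]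
    _ ≤ ∑ k, μ.1 k * f k :=
        Finset.sum_le_sum fun k _ => mul_le_mul_of_nonneg_left (h k) (μ.2.1 k)

lemma Model.val_nonneg (M : Model O H Pol) (π : Pol) : 0 ≤ M.val π :=
  integral_nonneg fun o => Finset.sum_nonneg fun h _ => M.R_nonneg o h

lemma Model.val_le_one (M : Model O H Pol) (π : Pol) : M.val π ≤ 1 := by
  haveI := M.prob π
  have h : ‖∫ o, (∑ h, M.R o h) ∂(M.P π)‖ ≤ 1 * ((M.P π) Set.univ).toReal := by
    refine norm_integral_le_of_norm_le_const (ae_of_all _ fun o => ?_)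
    rw [Real.norm_eq_abs, abs_of_nonneg (Finset.sum_nonneg fun h _ => M.R_nonneg o h)]
    exact M.sumR_le_one o
  rw [measure_univ] at h
  simp only [ENNReal.toReal_one, mul_one] at h
  calc M.val π ≤ ‖M.val π‖ := le_abs_self _
    _ ≤ 1 := h

lemma hellingerSq_nonneg {Ω : Type*} [MeasurableSpace Ω] (P Q : Measure Ω) :
    0 ≤ hellingerSq P Q := integral_nonneg fun _ => sq_nonneg _

lemma hellingerSq_le_two {Ω : Type*} [MeasurableSpace Ω] (P Q : Measure Ω)
    [IsProbabilityMeasure P] [IsProbabilityMeasure Q] : hellingerSq P Q ≤ 2 := by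
  have hP : P.rnDeriv (P + Q) ≤ᵐ[P + Q] 1 :=
    Measure.rnDeriv_le_one_of_le (Measure.le_add_right le_rfl)
  have hQ : Q.rnDeriv (P + Q) ≤ᵐ[P + Q] 1 :=
    Measure.rnDeriv_le_one_of_le (Measure.le_add_left le_rfl)
  have hbound : ∀ᵐ x ∂(P + Q),
      ‖(Real.sqrt ((P.rnDeriv (P + Q) x).toReal)
        - Real.sqrt ((Q.rnDeriv (P + Q) x).toReal)) ^ 2‖ ≤ 1 := by
    filter_upwards [hP, hQ] with x h1 h2
    have ha : ((P.rnDeriv (P + Q)) x).toReal ≤ 1 := by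
      simpa using ENNReal.toReal_mono (by norm_num) h1
    have hb : ((Q.rnDeriv (P + Q)) x).toReal ≤ 1 := by
      simpa using ENNReal.toReal_mono (by norm_num) h2
    have ha' := Real.sqrt_le_one.mpr ha
    have hb' := Real.sqrt_le_one.mpr hb
    have ha0 := Real.sqrt_nonneg ((P.rnDeriv (P + Q)) x).toReal
    have hb0 := Real.sqrt_nonneg ((Q.rnDeriv (P + Q)) x).toReal
    rw [Real.norm_eq_abs, abs_of_nonneg (sq_nonneg _)]
    nlinarith
  have h := norm_integral_le_of_norm_le_const hbound
  have huniv : (((P + Q) : Measure Ω) Set.univ).toReal = 2 := by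
    simp [Measure.add_apply]; norm_num
  rw [measureReal_def, huniv, one_mul] at h
  calc hellingerSq P Q ≤ ‖hellingerSq P Q‖ := le_abs_self _
    _ ≤ 2 := h

lemma DRL2_nonneg (M M' : Model O H Pol) (π : Pol) : 0 ≤ DRL2 M M' π :=
  add_nonneg (hellingerSq_nonneg _ _)
    (integral_nonneg fun o => Finset.sum_nonneg fun h _ => sq_nonneg _)

lemma DRL2_le (M M' : Model O H Pol) (π : Pol) : DRL2 M M' π ≤ 2 + H := by
  haveI := M.prob π
  haveI := M'.prob π
  have h1 : hellingerSq (M.P π) (M'.P π) ≤ 2 := hellingerSq_le_two _ _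
  have h2 : (∫ o, (∑ h, (M.R o h - M'.R o h) ^ 2) ∂(M.P π)) ≤ (H : ℝ) := by
    have h : ‖∫ o, (∑ h, (M.R o h - M'.R o h) ^ 2) ∂(M.P π)‖
        ≤ (H : ℝ) * ((M.P π) Set.univ).toReal := by
      refine norm_integral_le_of_norm_le_const (ae_of_all _ fun o => ?_)
      rw [Real.norm_eq_abs, abs_of_nonneg (Finset.sum_nonneg fun h _ => sq_nonneg _)]
      calc ∑ h, (M.R o h - M'.R o h) ^ 2 ≤ ∑ _h : Fin H, (1 : ℝ) := by
            refine Finset.sum_le_sum fun h _ => ?_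
            have h1 := M.R_nonneg o h; have h2 := M.R_le_one o h
            have h3 := M'.R_nonneg o h; have h4 := M'.R_le_one o h
            nlinarith
        _ = (H : ℝ) := by simp
    rw [measure_univ] at h
    simp only [ENNReal.toReal_one, mul_one] at h
    exact (le_abs_self _).trans h
  unfold DRL2; linarith

/-! ### Main theorem -/

/-- Theorem (E2D meta-algorithm): if at each round `t` the policy distribution `p^t`
minimizes the E2D risk `V̂^{μ^t}_γ`, then the (expected) regret against the true model
`M* = Mdl istar` is bounded by `T·dec̄_γ(𝓜) + γ·Est`, where `Est` is the cumulative
online estimation error of the randomized estimators `μ^t`. -/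
theorem e2d_meta_regret
    [Nonempty Pol] [Nonempty ι] (hH : 1 ≤ H)
    (Mdl : ι → Model O H Pol) (πopt : ι → Pol)
    (hπopt : ∀ (i : ι) (π : Pol), (Mdl i).val π ≤ (Mdl i).val (πopt i))
    (γ : ℝ) (hγ : 0 < γ)
    (T : ℕ) (hT : 1 ≤ T) (istar : ι)
    (μt : Fin T → ProbDist ι) (pt : Fin T → ProbDist Pol)
    (hmin : ∀ (t : Fin T) (q : ProbDist Pol),
      Vhat γ Mdl πopt (μt t) (pt t) ≤ Vhat γ Mdl πopt (μt t) q) :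
    ∑ t, ∑ π, (pt t).1 π *
        ((Mdl istar).val (πopt istar) - (Mdl istar).val π)
      ≤ T * decBar γ Mdl πopt
        + γ * ∑ t, ∑ π, (pt t).1 π * ∑ j, (μt t).1 j * DRL2 (Mdl istar) (Mdl j) π := by
  classical
  -- notation for the inner term
  set term : ι → ι → Pol → ℝ := fun i j π =>
    (Mdl i).val (πopt i) - (Mdl i).val π - γ * DRL2 (Mdl i) (Mdl j) π with hterm
  set B : ℝ := 1 + γ * (2 + H) with hB
  have hterm_le : ∀ i j π, term i j π ≤ 1 := fun i j π => by
    have h1 := (Mdl i).val_le_one (πopt i)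
    have h2 := (Mdl i).val_nonneg π
    have h3 := DRL2_nonneg (Mdl i) (Mdl j) π
    simp only [hterm]; nlinarith
  have hterm_ge : ∀ i j π, -B ≤ term i j π := fun i j π => by
    have h1 := (Mdl i).val_nonneg (πopt i)
    have h2 := (Mdl i).val_le_one π
    have h3 := DRL2_le (Mdl i) (Mdl j) π
    have h4 := DRL2_nonneg (Mdl i) (Mdl j) π
    simp only [hterm, hB]; nlinarith
  -- the expression appearing inside the sup
  set E : ProbDist ι → ProbDist Pol → ι → ℝ := fun μ p i =>
    ∑ π, p.1 π * ∑ j, μ.1 j * term i j π with hE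
  have hE_le : ∀ μ p i, E μ p i ≤ 1 := fun μ p i =>
    p.sum_mul_le fun π => μ.sum_mul_le fun j => hterm_le i j π
  have hE_ge : ∀ μ p i, -B ≤ E μ p i := fun μ p i =>
    p.le_sum_mul fun π => μ.le_sum_mul fun j => hterm_ge i j π
  have hVhat_eq : ∀ μ p, Vhat γ Mdl πopt μ p = ⨆ i, E μ p i := fun μ p => rfl
  have hbddE : ∀ μ p, BddAbove (Set.range (E μ p)) := fun μ p => ⟨1, by
    rintro _ ⟨i, rfl⟩; exact hE_le μ p i⟩
  have hVhat_le_one : ∀ μ p, Vhat γ Mdl πopt μ p ≤ 1 := fun μ p => by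
    rw [hVhat_eq]; exact ciSup_le fun i => hE_le μ p i
  have hVhat_ge : ∀ μ p, -B ≤ Vhat γ Mdl πopt μ p := fun μ p => by
    rw [hVhat_eq]
    exact (hE_ge μ p (Classical.arbitrary ι)).trans (le_ciSup (hbddE μ p) _)
  have hdec_eq : ∀ μ, dec γ Mdl πopt μ = ⨅ p, Vhat γ Mdl πopt μ p := fun μ => rfl
  have hdec_le_one : ∀ μ, dec γ Mdl πopt μ ≤ 1 := fun μ => by
    rw [hdec_eq]
    refine le_trans (ciInf_le ⟨-B, ?_⟩ (Classical.arbitrary _)) (hVhat_le_one μ _)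
    rintro _ ⟨p, rfl⟩; exact hVhat_ge μ p
  -- per-round bound
  have key : ∀ t : Fin T,
      ∑ π, (pt t).1 π * ((Mdl istar).val (πopt istar) - (Mdl istar).val π)
        ≤ decBar γ Mdl πopt
          + γ * ∑ π, (pt t).1 π * ∑ j, (μt t).1 j * DRL2 (Mdl istar) (Mdl j) π := by
    intro t
    have h1 : E (μt t) (pt t) istar ≤ Vhat γ Mdl πopt (μt t) (pt t) := by
      rw [hVhat_eq]; exact le_ciSup (hbddE _ _) istar
    have h2 : Vhat γ Mdl πopt (μt t) (pt t) ≤ dec γ Mdl πopt (μt t) := by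
      rw [hdec_eq]; exact le_ciInf (hmin t)
    have h3 : dec γ Mdl πopt (μt t) ≤ decBar γ Mdl πopt :=
      le_ciSup ⟨1, by rintro _ ⟨μ, rfl⟩; exact hdec_le_one μ⟩ (μt t)
    have hin : ∀ π : Pol, ∑ j, (μt t).1 j * term istar j π
        = ((Mdl istar).val (πopt istar) - (Mdl istar).val π)
          - γ * ∑ j, (μt t).1 j * DRL2 (Mdl istar) (Mdl j) π := by
      intro π
      calc ∑ j, (μt t).1 j * term istar j π
          = ∑ j, ((μt t).1 j * ((Mdl istar).val (πopt istar) - (Mdl istar).val π)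
              - γ * ((μt t).1 j * DRL2 (Mdl istar) (Mdl j) π)) :=
            Finset.sum_congr rfl fun j _ => by simp only [hterm]; ring
        _ = ((Mdl istar).val (πopt istar) - (Mdl istar).val π)
            - γ * ∑ j, (μt t).1 j * DRL2 (Mdl istar) (Mdl j) π := by
            rw [Finset.sum_sub_distrib, ← Finset.sum_mul, (μt t).2.2, one_mul,
              ← Finset.mul_sum]
    have hexp : E (μt t) (pt t) istar
        = ∑ π, (pt t).1 π * ((Mdl istar).val (πopt istar) - (Mdl istar).val π)
          - γ * ∑ π, (pt t).1 π * ∑ j, (μt t).1 j * DRL2 (Mdl istar) (Mdl j) π := by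
      simp only [hE]
      calc ∑ π, (pt t).1 π * ∑ j, (μt t).1 j * term istar j π
          = ∑ π, ((pt t).1 π * ((Mdl istar).val (πopt istar) - (Mdl istar).val π)
              - γ * ((pt t).1 π * ∑ j, (μt t).1 j * DRL2 (Mdl istar) (Mdl j) π)) :=
            Finset.sum_congr rfl fun π _ => by rw [hin π]; ring
        _ = _ := by rw [Finset.sum_sub_distrib, ← Finset.mul_sum]
    linarith [h1.trans (h2.trans h3)]
  calc ∑ t, ∑ π, (pt t).1 π * ((Mdl istar).val (πopt istar) - (Mdl istar).val π)
      ≤ ∑ t : Fin T, (decBar γ Mdl πopt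
          + γ * ∑ π, (pt t).1 π * ∑ j, (μt t).1 j * DRL2 (Mdl istar) (Mdl j) π) :=
        Finset.sum_le_sum fun t _ => key t
    _ = T * decBar γ Mdl πopt
        + γ * ∑ t, ∑ π, (pt t).1 π * ∑ j, (μt t).1 j * DRL2 (Mdl istar) (Mdl j) π := by
        rw [Finset.sum_add_distrib, Finset.sum_const, Finset.card_univ, Fintype.card_fin,
          nsmul_eq_mul, Finset.mul_sum]
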